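/- Let D be a ZX-diagram and w a Pauli labelling of D. Then for every node ν there exists λ ∈ ℂ with w_ν|ν⟩ = λ|ν⟩ (i.e. w is a Pauli web) if and only if w satisfies all of: (H condition); (all-or-nothing condition); (parity condition) for every spider ν, the number of wires adjacent to ν with support of the same type as ν (Z-support if t(ν) = Z, X-support if t(ν) = X) is even, unless φ(ν) is an odd integer multiple of π/2, in which case that number is even if and only if no wire adjacent to ν has support of the opposite type (X-support if t(ν) = Z, Z-support if t(ν) = X); and (Clifford condition) for every spider ν, if some wire adjacent to ν has support of the opposite type, then φ(ν) is an integer multiple of π/2. -/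

import Mathlib

/-- The four Pauli labels. -/
inductive Pauli | I | X | Y | Z
  deriving DecidableEq

instance : Fintype Pauli :=
  ⟨{Pauli.I, Pauli.X, Pauli.Y, Pauli.Z}, fun x => by cases x <;> simp⟩

/-- The Pauli matrices as 2×2 complex matrices. -/
def Pauli.mat : Pauli → Matrix (Fin 2) (Fin 2) ℂ
  | Pauli.I => 1
  | Pauli.X => !![0, 1; 1, 0]
  | Pauli.Y => !![0, -Complex.I; Complex.I, 0]
  | Pauli.Z => !![1, 0; 0, -1]

/-- A wire labelled `p` has X-support if `p ∈ {X, Y}`. -/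
def Pauli.hasX : Pauli → Bool
  | Pauli.X => true | Pauli.Y => true | _ => false

/-- A wire labelled `p` has Z-support if `p ∈ {Y, Z}`. -/
def Pauli.hasZ : Pauli → Bool
  | Pauli.Y => true | Pauli.Z => true | _ => false

/-- Node types of a ZX-diagram: Z-spider, X-spider, or H-gate. -/
inductive NodeType | Z | X | H
  deriving DecidableEq

/-- A ZX-diagram: nodes, wires, adjacency (each wire meets at most two nodes),
types, phases, and input/output wires.  Nodes of type `H` have exactly two wires. -/
structure ZXDiagram (Node Wire : Type) [Fintype Node] [DecidableEq Node]
    [Fintype Wire] [DecidableEq Wire] where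
  adj : Node → Wire → Bool
  typ : Node → NodeType
  phase : Node → ℝ
  inputs : Finset Wire
  outputs : Finset Wire
  wire_max_two : ∀ w : Wire, (Finset.univ.filter fun n => adj n w = true).card ≤ 2
  h_deg_two : ∀ n : Node, typ n = NodeType.H →
    (Finset.univ.filter fun w => adj n w = true).card = 2

variable {Node Wire : Type} [Fintype Node] [DecidableEq Node] [Fintype Wire] [DecidableEq Wire]

/-- Spiders are the nodes of type Z or X. -/
def ZXDiagram.IsSpiderNode (D : ZXDiagram Node Wire) (ν : Node) : Prop :=
  D.typ ν ≠ NodeType.H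

/-- Support of the same type as a spider: Z-support for Z-spiders, X-support for X-spiders. -/
def sameSupp : NodeType → Pauli → Bool
  | NodeType.Z, p => p.hasZ
  | NodeType.X, p => p.hasX
  | NodeType.H, _ => false

/-- Support of the opposite type: X-support for Z-spiders, Z-support for X-spiders. -/
def oppSupp : NodeType → Pauli → Bool
  | NodeType.Z, p => p.hasX
  | NodeType.X, p => p.hasZ
  | NodeType.H, _ => false

/-- The H condition for a Pauli labelling. -/
def HCond (D : ZXDiagram Node Wire) (w : Wire → Pauli) : Prop :=
  ∀ ν j₁ j₂, D.typ ν = NodeType.H → D.adj ν j₁ = true → D.adj ν j₂ = true → j₁ ≠ j₂ →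
    (((w j₁).hasX = true) ↔ ((w j₂).hasZ = true)) ∧
    (((w j₁).hasZ = true) ↔ ((w j₂).hasX = true))

/-- The all-or-nothing condition for a Pauli labelling. -/
def AllOrNothing (D : ZXDiagram Node Wire) (w : Wire → Pauli) : Prop :=
  ∀ ν, D.IsSpiderNode ν →
    (∀ j, D.adj ν j = true → oppSupp (D.typ ν) (w j) = true) ∨
    (∀ j, D.adj ν j = true → oppSupp (D.typ ν) (w j) = false)

/-- A Pauli semiweb is a Pauli labelling satisfying the H and all-or-nothing conditions. -/
def IsSemiweb (D : ZXDiagram Node Wire) (w : Wire → Pauli) : Prop :=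
  HCond D w ∧ AllOrNothing D w

/-- The number of wires adjacent to `ν` with support of the same type as `ν`. -/
def sameCount (D : ZXDiagram Node Wire) (w : Wire → Pauli) (ν : Node) : ℕ :=
  (Finset.univ.filter fun j => D.adj ν j = true ∧ sameSupp (D.typ ν) (w j) = true).card

/-- Some wire adjacent to `ν` has support of the opposite type. -/
def HasOpp (D : ZXDiagram Node Wire) (w : Wire → Pauli) (ν : Node) : Prop :=
  ∃ j, D.adj ν j = true ∧ oppSupp (D.typ ν) (w j) = true

/-- `x` is an odd integer multiple of `π/2`. -/
def IsOddMulHalfPi (x : ℝ) : Prop := ∃ k : ℤ, x = (2 * k + 1) * (Real.pi / 2)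

/-- `x` is an integer multiple of `π/2`. -/
def IsMulHalfPi (x : ℝ) : Prop := ∃ k : ℤ, x = k * (Real.pi / 2)

/-- The parity condition at a spider `ν`. -/
def ParityAt (D : ZXDiagram Node Wire) (w : Wire → Pauli) (ν : Node) : Prop :=
  (¬ IsOddMulHalfPi (D.phase ν) → Even (sameCount D w ν)) ∧
  (IsOddMulHalfPi (D.phase ν) → (Even (sameCount D w ν) ↔ ¬ HasOpp D w ν))

/-- The Kronecker product `P₁ ⊗ ⋯ ⊗ P_k` of Pauli matrices, realized as a matrix acting on
the function space `(ι → Fin 2) → ℂ`, acting by `p j` on the `j`-th factor. -/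
def pauliOp {ι : Type*} [Fintype ι] (p : ι → Pauli) :
    Matrix (ι → Fin 2) (ι → Fin 2) ℂ :=
  Matrix.of fun f g => ∏ j, (p j).mat (f j) (g j)

/-- The twisted local state `|ν_α⟩` of a node `ν`, living in the tensor power of `ℂ²` indexed
by the wires adjacent to `ν` (realized as a function space).  Taking `α = 0` gives the local
state `|ν⟩`. -/
noncomputable def localState {Node Wire : Type} [Fintype Node] [DecidableEq Node]
    [Fintype Wire] [DecidableEq Wire] (D : ZXDiagram Node Wire) (ν : Node) (α : ℝ) :
    ({j : Wire // D.adj ν j = true} → Fin 2) → ℂ :=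
  match D.typ ν with
  | NodeType.Z => fun f =>
      (if ∀ j, f j = 0 then (1 : ℂ) else 0) +
        Complex.exp ((D.phase ν + α) * Complex.I) * (if ∀ j, f j = 1 then 1 else 0)
  | NodeType.X => fun f =>
      1 + Complex.exp ((D.phase ν + α) * Complex.I) *
        (-1 : ℂ) ^ (Finset.univ.filter fun j => f j = 1).card
  | NodeType.H => fun f => if ∀ j, f j = 1 then (-1 : ℂ) else 1

/-- `w` is a Pauli web: at every node, acting with the Paulis on the adjacent wires
sends the local state to a multiple of itself. -/
def IsPauliWeb {Node Wire : Type} [Fintype Node] [DecidableEq Node]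
    [Fintype Wire] [DecidableEq Wire] (D : ZXDiagram Node Wire) (w : Wire → Pauli) : Prop :=
  ∀ ν : Node, ∃ lam : ℂ,
    (pauliOp fun j : {j : Wire // D.adj ν j = true} => w j.1).mulVec (localState D ν 0) =
      lam • localState D ν 0

/-- The parity condition for all spiders. -/
def ParityCond {Node Wire : Type} [Fintype Node] [DecidableEq Node]
    [Fintype Wire] [DecidableEq Wire] (D : ZXDiagram Node Wire) (w : Wire → Pauli) : Prop :=
  ∀ ν, D.IsSpiderNode ν → ParityAt D w ν

/-- The Clifford condition: any spider with support of the opposite type on an adjacent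
wire has phase an integer multiple of `π/2`. -/
def CliffordCond {Node Wire : Type} [Fintype Node] [DecidableEq Node]
    [Fintype Wire] [DecidableEq Wire] (D : ZXDiagram Node Wire) (w : Wire → Pauli) : Prop :=
  ∀ ν, D.IsSpiderNode ν → HasOpp D w ν → IsMulHalfPi (D.phase ν)


open Complex Finset

namespace PW

def pflip (p : Pauli) (a : Fin 2) : Fin 2 := if p.hasX then a + 1 else a

noncomputable def pent (p : Pauli) (a : Fin 2) : ℂ := p.mat a (pflip p a)

lemma mat_eq_zero (p : Pauli) (a b : Fin 2) (h : b ≠ pflip p a) : p.mat a b = 0 := by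
  cases p <;> fin_cases a <;> fin_cases b <;>
    simp_all [pflip, Pauli.mat, Pauli.hasX, Matrix.one_apply]

lemma pent_eq (p : Pauli) (a : Fin 2) :
    pent p a = (if p = Pauli.Y then -Complex.I else 1) *
      (if p.hasZ = true ∧ a = 1 then -1 else 1) := by
  cases p <;> fin_cases a <;>
    simp [pent, pflip, Pauli.mat, Pauli.hasX, Pauli.hasZ, Matrix.one_apply]

lemma pent_ne_zero (p : Pauli) (a : Fin 2) : pent p a ≠ 0 := by
  rw [pent_eq]
  apply mul_ne_zero <;> split <;> norm_num [Complex.I_ne_zero]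

lemma pflip_pflip (p : Pauli) (a : Fin 2) : pflip p (pflip p a) = a := by
  revert a; cases p <;> decide

lemma flip_ite (p : Pauli) (a : Fin 2) :
    (if pflip p a = 1 then (-1 : ℂ) else 1) =
      (if p.hasX = true then -1 else 1) * (if a = 1 then -1 else 1) := by
  cases p <;> fin_cases a <;> simp [pflip, Pauli.hasX] <;> norm_num [show ((1:Fin 2)+1 : Fin 2) = 0 from rfl]

lemma pent_zero_of_not_hasX (p : Pauli) (h : p.hasX = false) : pent p 0 = 1 := by
  cases p <;> simp_all [pent, pflip, Pauli.mat, Pauli.hasX, Matrix.one_apply]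

lemma pent_one_of_not_hasX (p : Pauli) (h : p.hasX = false) :
    pent p 1 = if p.hasZ = true then -1 else 1 := by
  cases p <;> simp_all [pent, pflip, Pauli.mat, Pauli.hasX, Pauli.hasZ, Matrix.one_apply]

lemma pent_zero_of_hasX (p : Pauli) (h : p.hasX = true) :
    pent p 0 = if p.hasZ = true then -Complex.I else 1 := by
  cases p <;> simp_all [pent, pflip, Pauli.mat, Pauli.hasX, Pauli.hasZ]

lemma pent_one_of_hasX (p : Pauli) (h : p.hasX = true) :
    pent p 1 = if p.hasZ = true then Complex.I else 1 := by
  cases p <;> simp_all [pent, pflip, Pauli.mat, Pauli.hasX, Pauli.hasZ]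

end PW
namespace PW

variable {ι : Type*} [Fintype ι] [DecidableEq ι]

def FF (p : ι → Pauli) (f : ι → Fin 2) : ι → Fin 2 := fun j => pflip (p j) (f j)

noncomputable def CC (p : ι → Pauli) (f : ι → Fin 2) : ℂ := ∏ j, pent (p j) (f j)

lemma CC_ne_zero (p : ι → Pauli) (f : ι → Fin 2) : CC p f ≠ 0 :=
  Finset.prod_ne_zero_iff.mpr fun j _ => pent_ne_zero _ _

lemma FF_FF (p : ι → Pauli) (f : ι → Fin 2) : FF p (FF p f) = f := by
  funext j; exact pflip_pflip _ _

lemma mulVec_eq (p : ι → Pauli) (v : (ι → Fin 2) → ℂ) (f : ι → Fin 2) :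
    (pauliOp p).mulVec v f = CC p f * v (FF p f) := by
  unfold Matrix.mulVec pauliOp CC FF dotProduct
  rw [Finset.sum_eq_single (FF p f)]
  · rfl
  · intro g _ hg
    obtain ⟨j, hj⟩ := Function.ne_iff.mp hg
    show (∏ j, (p j).mat (f j) (g j)) * v g = 0
    rw [Finset.prod_eq_zero (Finset.mem_univ j) (mat_eq_zero _ _ _ hj), zero_mul]
  · intro h; exact absurd (Finset.mem_univ _) h

lemma exists_iff (p : ι → Pauli) (v : (ι → Fin 2) → ℂ) :
    (∃ lam : ℂ, (pauliOp p).mulVec v = lam • v) ↔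
      ∃ lam : ℂ, ∀ f, CC p f * v (FF p f) = lam * v f := by
  constructor <;> rintro ⟨lam, h⟩ <;> refine ⟨lam, ?_⟩
  · intro f
    rw [← mulVec_eq, h, Pi.smul_apply, smul_eq_mul]
  · funext f
    rw [mulVec_eq, h f, Pi.smul_apply, smul_eq_mul]

lemma prod_ite_card (P : ι → Prop) [DecidablePred P] (c : ℂ) :
    (∏ j, if P j then c else 1) = c ^ (Finset.univ.filter P).card := by
  rw [← Finset.prod_filter, Finset.prod_const]

lemma CC_eq (p : ι → Pauli) (f : ι → Fin 2) :
    CC p f = (-Complex.I) ^ (Finset.univ.filter fun j => p j = Pauli.Y).card *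
      (-1 : ℂ) ^ (Finset.univ.filter fun j => (p j).hasZ = true ∧ f j = 1).card := by
  rw [← prod_ite_card, ← prod_ite_card, ← Finset.prod_mul_distrib]
  exact Finset.prod_congr rfl fun j _ => pent_eq _ _

end PW
namespace PW

lemma exp_sq_eq_one_iff (θ : ℝ) :
    Complex.exp (θ * Complex.I) * Complex.exp (θ * Complex.I) = 1 ↔
      ∃ k : ℤ, θ = k * Real.pi := by
  rw [← Complex.exp_add, Complex.exp_eq_one_iff]
  constructor
  · rintro ⟨n, hn⟩
    refine ⟨n, ?_⟩
    have h2 : ((2 * θ : ℝ) : ℂ) * Complex.I = ((2 * Real.pi * n : ℝ) : ℂ) * Complex.I := by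
      push_cast
      linear_combination hn
    have h3 := mul_right_cancel₀ Complex.I_ne_zero h2
    have h4 : (2 * θ : ℝ) = 2 * Real.pi * n := Complex.ofReal_inj.mp h3
    linarith
  · rintro ⟨k, rfl⟩
    exact ⟨k, by push_cast; ring⟩

lemma exp_sq_eq_neg_one_iff (θ : ℝ) :
    Complex.exp (θ * Complex.I) * Complex.exp (θ * Complex.I) = -1 ↔
      IsOddMulHalfPi θ := by
  rw [← Complex.exp_add]
  constructor
  · intro h
    have h1 : Complex.exp (θ * Complex.I + θ * Complex.I + Real.pi * Complex.I) = 1 := by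
      rw [Complex.exp_add, h, Complex.exp_pi_mul_I]; ring
    rw [Complex.exp_eq_one_iff] at h1
    obtain ⟨n, hn⟩ := h1
    refine ⟨n - 1, ?_⟩
    have h2 : ((2 * θ + Real.pi : ℝ) : ℂ) * Complex.I =
        ((2 * Real.pi * n : ℝ) : ℂ) * Complex.I := by
      push_cast
      linear_combination hn
    have h4 : (2 * θ + Real.pi : ℝ) = 2 * Real.pi * n :=
      Complex.ofReal_inj.mp (mul_right_cancel₀ Complex.I_ne_zero h2)
    push_cast
    linarith
  · rintro ⟨k, rfl⟩
    have : (((2 * k + 1) * (Real.pi / 2) : ℝ) : ℂ) * Complex.I +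
        (((2 * k + 1) * (Real.pi / 2) : ℝ) : ℂ) * Complex.I =
        (k : ℂ) * (2 * Real.pi * Complex.I) + Real.pi * Complex.I := by
      push_cast; ring
    rw [this, Complex.exp_add, Complex.exp_int_mul_two_pi_mul_I, Complex.exp_pi_mul_I]
    ring

lemma not_isOdd_of_pi_mul (k : ℤ) : ¬ IsOddMulHalfPi ((k : ℝ) * Real.pi) := by
  rintro ⟨j, hj⟩
  have h2 : (2 * k : ℝ) * (Real.pi / 2) = (2 * j + 1) * (Real.pi / 2) := by linarith
  have h3 : (2 * k : ℝ) = 2 * j + 1 :=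
    mul_right_cancel₀ (by positivity : Real.pi / 2 ≠ 0) h2
  have h4 : (2 * k : ℤ) = 2 * j + 1 := by exact_mod_cast h3
  omega

lemma isMul_of_pi_mul (k : ℤ) : IsMulHalfPi ((k : ℝ) * Real.pi) :=
  ⟨2 * k, by push_cast; ring⟩

lemma isMul_of_isOdd {θ : ℝ} (h : IsOddMulHalfPi θ) : IsMulHalfPi θ := by
  obtain ⟨k, rfl⟩ := h; exact ⟨2 * k + 1, by push_cast; ring⟩

lemma isMul_cases {θ : ℝ} (h : IsMulHalfPi θ) :
    (∃ k : ℤ, θ = k * Real.pi) ∨ IsOddMulHalfPi θ := by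
  obtain ⟨k, rfl⟩ := h
  rcases Int.even_or_odd k with ⟨m, rfl⟩ | ⟨m, rfl⟩
  · exact Or.inl ⟨m, by push_cast; ring⟩
  · exact Or.inr ⟨m, by push_cast; ring⟩

end PW
namespace PW

theorem cond_translate {ι : Type*} (θ : ℝ) (A : ι → Prop) (m : ℕ)
    (hm : (∀ j, A j) → (¬ ∃ j, A j) → Even m) :
    (((∀ j, ¬ A j) ∧ Even m) ∨
      ((∀ j, A j) ∧
        Complex.exp (θ * Complex.I) * Complex.exp (θ * Complex.I) = (-1) ^ m)) ↔
    (((∀ j, A j) ∨ (∀ j, ¬ A j)) ∧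
      ((¬ IsOddMulHalfPi θ → Even m) ∧ (IsOddMulHalfPi θ → (Even m ↔ ¬ ∃ j, A j))) ∧
      ((∃ j, A j) → IsMulHalfPi θ)) := by
  constructor
  · rintro (⟨hA, hev⟩ | ⟨hA, he⟩)
    · have hne : ¬ ∃ j, A j := fun ⟨j, hj⟩ => hA j hj
      exact ⟨Or.inr hA, ⟨fun _ => hev, fun _ => iff_of_true hev hne⟩,
        fun h => absurd h hne⟩
    · by_cases hex : ∃ j, A j
      · rcases Nat.even_or_odd m with hev | hod
        · rw [hev.neg_one_pow, exp_sq_eq_one_iff] at he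
          obtain ⟨k, rfl⟩ := he
          exact ⟨Or.inl hA, ⟨fun _ => hev, fun h => absurd h (not_isOdd_of_pi_mul k)⟩,
            fun _ => isMul_of_pi_mul k⟩
        · rw [hod.neg_one_pow, exp_sq_eq_neg_one_iff] at he
          exact ⟨Or.inl hA,
            ⟨fun h => absurd he h, fun _ =>
              iff_of_false (Nat.not_even_iff_odd.mpr hod) (not_not.mpr hex)⟩,
            fun _ => isMul_of_isOdd he⟩
      · have hev := hm hA hex
        exact ⟨Or.inl hA, ⟨fun _ => hev, fun _ => iff_of_true hev hex⟩,
          fun h => absurd h hex⟩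
  · rintro ⟨haon, ⟨hp1, hp2⟩, hcl⟩
    rcases haon with hA | hA
    · by_cases hex : ∃ j, A j
      · rcases isMul_cases (hcl hex) with ⟨k, rfl⟩ | hodd
        · have hnodd := not_isOdd_of_pi_mul k
          have hev := hp1 hnodd
          refine Or.inr ⟨hA, ?_⟩
          rw [hev.neg_one_pow, exp_sq_eq_one_iff]
          exact ⟨k, rfl⟩
        · have hod : ¬ Even m := fun hev => ((hp2 hodd).mp hev) hex
          refine Or.inr ⟨hA, ?_⟩
          rw [(Nat.not_even_iff_odd.mp hod).neg_one_pow, exp_sq_eq_neg_one_iff]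
          exact hodd
      · exact Or.inl ⟨fun j hj => hex ⟨j, hj⟩, hm hA hex⟩
    · refine Or.inl ⟨hA, ?_⟩
      by_cases hodd : IsOddMulHalfPi θ
      · exact (hp2 hodd).mpr fun ⟨j, hj⟩ => hA j hj
      · exact hp1 hodd

end PW
namespace PW

lemma pflip_of_hasX {p : Pauli} (h : p.hasX = true) (a : Fin 2) : pflip p a = a + 1 := by
  simp [pflip, h]

lemma pflip_of_not_hasX {p : Pauli} (h : p.hasX = false) (a : Fin 2) : pflip p a = a := by
  simp [pflip, h]

lemma fin2_add_one_eq_zero (a : Fin 2) : a + 1 = 0 ↔ a = 1 := by revert a; decide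
lemma fin2_add_one_eq_one (a : Fin 2) : a + 1 = 1 ↔ a = 0 := by revert a; decide
lemma fin2_zero_add_one : (0 : Fin 2) + 1 = 1 := by decide
lemma fin2_one_add_one : (1 : Fin 2) + 1 = 0 := by decide

variable {ι : Type*} [Fintype ι] [DecidableEq ι]

lemma neg_I_pow_mul_I_pow (m : ℕ) : (-Complex.I) ^ m * Complex.I ^ m = 1 := by
  rw [← mul_pow]; norm_num

lemma I_pow_mul_I_pow (m : ℕ) : Complex.I ^ m * Complex.I ^ m = (-1) ^ m := by
  rw [← mul_pow, Complex.I_mul_I]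

theorem zcore (p : ι → Pauli) (e : ℂ) (he : e ≠ 0) :
    (∃ lam : ℂ, ∀ f : ι → Fin 2,
        CC p f * ((if ∀ j, FF p f j = 0 then (1:ℂ) else 0) +
            e * (if ∀ j, FF p f j = 1 then 1 else 0)) =
          lam * ((if ∀ j, f j = 0 then (1:ℂ) else 0) +
            e * (if ∀ j, f j = 1 then 1 else 0))) ↔
      ((∀ j, ¬ (p j).hasX = true) ∧
          Even (Finset.univ.filter fun j => (p j).hasZ = true).card) ∨
      ((∀ j, (p j).hasX = true) ∧
        e * e = (-1) ^ (Finset.univ.filter fun j => (p j).hasZ = true).card) := by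
  set m := (Finset.univ.filter fun j => (p j).hasZ = true).card with hm
  rcases isEmpty_or_nonempty ι with hι | hι
  · constructor
    · intro _
      left
      refine ⟨fun j => isEmptyElim j, ?_⟩
      simp [hm, Finset.univ_eq_empty]
    · intro _
      refine ⟨1, fun f => ?_⟩
      have hFF : FF p f = f := funext fun j => isEmptyElim j
      have hCC : CC p f = 1 := by simp [CC, Finset.univ_eq_empty]
      rw [hFF, hCC]
  · obtain ⟨j₀⟩ := hι
    constructor
    · rintro ⟨lam, h⟩
      by_cases hall : ∀ j, (p j).hasX = true
      · right
        refine ⟨hall, ?_⟩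
        have h0 := h (fun _ => 0)
        have h1 := h (fun _ => 1)
        have hF0 : ∀ j, FF p (fun _ => (0:Fin 2)) j = 1 := fun j => by
          rw [FF, pflip_of_hasX (hall j), fin2_zero_add_one]
        have hF1 : ∀ j, FF p (fun _ => (1:Fin 2)) j = 0 := fun j => by
          rw [FF, pflip_of_hasX (hall j), fin2_one_add_one]
        have hC0 : CC p (fun _ => (0:Fin 2)) = (-Complex.I) ^ m := by
          rw [CC, hm, ← prod_ite_card]
          exact Finset.prod_congr rfl fun j _ => pent_zero_of_hasX _ (hall j)
        have hC1 : CC p (fun _ => (1:Fin 2)) = Complex.I ^ m := by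
          rw [CC, hm, ← prod_ite_card]
          exact Finset.prod_congr rfl fun j _ => pent_one_of_hasX _ (hall j)
        rw [hC0, if_pos hF0, if_neg (fun hz => absurd ((hz j₀).symm.trans (hF0 j₀)) (by decide)),
          if_pos (fun j => rfl), if_neg (fun hz : ∀ _, _ => absurd (hz j₀) (by decide))] at h0
        rw [hC1, if_pos hF1, if_neg (fun hz => absurd ((hz j₀).symm.trans (hF1 j₀)) (by decide)),
          if_pos (fun j => rfl), if_neg (fun hz : ∀ _, _ => absurd (hz j₀) (by decide))] at h1
        -- h0 : (-I)^m * (0 + e*1) = lam * (1 + e*0)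
        -- h1 : I^m * (1 + e*0) = lam * (0 + e*1)
        have hlam : (-Complex.I) ^ m * e = lam := by linear_combination h0
        have h2 : Complex.I ^ m = (-Complex.I) ^ m * (e * e) := by
          rw [← hlam] at h1; linear_combination h1
        calc e * e = ((-Complex.I) ^ m * Complex.I ^ m) * (e * e) := by
              rw [neg_I_pow_mul_I_pow, one_mul]
          _ = Complex.I ^ m * Complex.I ^ m := by rw [h2]; ring
          _ = (-1) ^ m := I_pow_mul_I_pow m
      · by_cases hnone : ∀ j, (p j).hasX = false
        · left
          refine ⟨fun j => by simp [hnone j], ?_⟩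
          have hFF : ∀ f, FF p f = f := fun f =>
            funext fun j => pflip_of_not_hasX (hnone j) (f j)
          have h0 := h (fun _ => 0)
          have h1 := h (fun _ => 1)
          rw [hFF] at h0 h1
          have hC0 : CC p (fun _ => (0:Fin 2)) = 1 :=
            Finset.prod_eq_one fun j _ => pent_zero_of_not_hasX _ (hnone j)
          have hC1 : CC p (fun _ => (1:Fin 2)) = (-1:ℂ) ^ m := by
            rw [CC, hm, ← prod_ite_card]
            exact Finset.prod_congr rfl fun j _ => pent_one_of_not_hasX _ (hnone j)
          rw [hC0, if_pos (fun j => rfl),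
            if_neg (fun hz : ∀ _, _ => absurd (hz j₀) (by decide))] at h0
          rw [hC1, if_pos (fun j => rfl),
            if_neg (fun hz : ∀ _, _ => absurd (hz j₀) (by decide))] at h1
          -- h0 : 1 * (1 + e * 0) = lam * (1 + e * 0)
          -- h1 : (-1)^m * (0 + e * 1) = lam * (0 + e * 1)
          have hlam : lam = 1 := by linear_combination -h0
          rw [hlam] at h1
          have hpow : (-1 : ℂ) ^ m = 1 := by
            have := mul_right_cancel₀ he
              (show ((-1:ℂ)) ^ m * e = 1 * e by linear_combination h1)
            simpa using this
          exact (neg_one_pow_eq_one_iff_even (by norm_num : (-1:ℂ) ≠ 1)).mp hpow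
        · exfalso
          obtain ⟨ja, hja⟩ : ∃ j, (p j).hasX = true := by
            push_neg at hnone
            obtain ⟨j, hj⟩ := hnone
            exact ⟨j, by revert hj; cases (p j).hasX <;> simp⟩
          obtain ⟨jb, hjb⟩ : ∃ j, (p j).hasX = false := by
            push_neg at hall
            obtain ⟨j, hj⟩ := hall
            exact ⟨j, by revert hj; cases (p j).hasX <;> simp⟩
          set g := FF p (fun _ => (0:Fin 2)) with hg
          have hga : g ja = 1 := by rw [hg, FF, pflip_of_hasX hja, fin2_zero_add_one]
          have hgb : g jb = 0 := by rw [hg, FF, pflip_of_not_hasX hjb]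
          have h0 := h (fun _ => 0)
          rw [if_neg (fun hz : ∀ _, _ => absurd ((hz ja).symm.trans hga) (by decide)),
            if_neg (fun hz : ∀ _, _ => absurd ((hz jb).symm.trans hgb) (by decide)),
            if_pos (fun j => rfl),
            if_neg (fun hz : ∀ _, _ => absurd (hz j₀) (by decide))] at h0
          -- h0 : CC * (0 + e * 0) = lam * (1 + e * 0)
          have hlam : lam = 0 := by linear_combination -h0
          have h2 := h g
          rw [hg, FF_FF, if_pos (fun j => rfl),
            if_neg (fun hz : ∀ _, _ => absurd (hz j₀) (by decide)), hlam] at h2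
          -- h2 : CC p g * (1 + e * 0) = 0 * v g
          have : CC p (FF p (fun _ => 0)) = 0 := by
            have h3 : CC p (FF p (fun _ => 0)) * 1 = 0 := by linear_combination h2
            simpa using h3
          exact CC_ne_zero _ _ this
    · rintro (⟨hnone', hev⟩ | ⟨hall, he2⟩)
      · have hnone : ∀ j, (p j).hasX = false := fun j => by
          have := hnone' j; revert this; cases (p j).hasX <;> simp
        refine ⟨1, fun f => ?_⟩
        have hFF : FF p f = f := funext fun j => pflip_of_not_hasX (hnone j) (f j)
        rw [hFF, one_mul]
        by_cases hf0 : ∀ j, f j = 0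
        · have hCC : CC p f = 1 := Finset.prod_eq_one fun j _ => by
            rw [hf0 j]; exact pent_zero_of_not_hasX _ (hnone j)
          rw [hCC, one_mul]
        · by_cases hf1 : ∀ j, f j = 1
          · have hCC : CC p f = 1 := by
              have : CC p f = (-1:ℂ) ^ m := by
                rw [CC, hm, ← prod_ite_card]
                exact Finset.prod_congr rfl fun j _ => by
                  rw [hf1 j]; exact pent_one_of_not_hasX _ (hnone j)
              rw [this, hev.neg_one_pow]
            rw [hCC, one_mul]
          · rw [if_neg hf0, if_neg hf1]
            ring
      · refine ⟨(-Complex.I) ^ m * e, fun f => ?_⟩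
        have hFj : ∀ j, FF p f j = f j + 1 := fun j => pflip_of_hasX (hall j) (f j)
        by_cases hf0 : ∀ j, f j = 0
        · have hF1 : ∀ j, FF p f j = 1 := fun j => by
            rw [hFj j, hf0 j, fin2_zero_add_one]
          have hCC : CC p f = (-Complex.I) ^ m := by
            rw [CC, hm, ← prod_ite_card]
            exact Finset.prod_congr rfl fun j _ => by
              rw [hf0 j]; exact pent_zero_of_hasX _ (hall j)
          rw [hCC, if_pos hF1, if_pos hf0,
            if_neg (fun hz : ∀ _, _ => absurd ((hz j₀).symm.trans (hF1 j₀)) (by decide)),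
            if_neg (fun hz : ∀ _, _ => absurd ((hz j₀).symm.trans (hf0 j₀)).symm (by decide))]
          ring
        · by_cases hf1 : ∀ j, f j = 1
          · have hF0 : ∀ j, FF p f j = 0 := fun j => by
              rw [hFj j, hf1 j, fin2_one_add_one]
            have hCC : CC p f = Complex.I ^ m := by
              rw [CC, hm, ← prod_ite_card]
              exact Finset.prod_congr rfl fun j _ => by
                rw [hf1 j]; exact pent_one_of_hasX _ (hall j)
            rw [hCC, if_pos hF0, if_pos hf1,
              if_neg (fun hz : ∀ _, _ => absurd ((hz j₀).symm.trans (hF0 j₀)).symm (by decide)),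
              if_neg (fun hz : ∀ _, _ => absurd ((hz j₀).symm.trans (hf1 j₀)) (by decide))]
            have : Complex.I ^ m = ((-Complex.I) ^ m * e) * e := by
              calc Complex.I ^ m = ((-Complex.I) ^ m * Complex.I ^ m) * Complex.I ^ m := by
                    rw [neg_I_pow_mul_I_pow, one_mul]
                _ = (-Complex.I) ^ m * (-1) ^ m := by rw [mul_assoc, I_pow_mul_I_pow]
                _ = ((-Complex.I) ^ m * e) * e := by rw [← he2]; ring
            rw [this]
            ring
          · have hg0 : ¬ ∀ j, FF p f j = 0 := fun hz =>
              hf1 fun j => (fin2_add_one_eq_zero (f j)).mp ((hFj j) ▸ hz j)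
            have hg1 : ¬ ∀ j, FF p f j = 1 := fun hz =>
              hf0 fun j => (fin2_add_one_eq_one (f j)).mp ((hFj j) ▸ hz j)
            rw [if_neg hf0, if_neg hf1, if_neg hg0, if_neg hg1]
            ring

end PW
namespace PW

lemma pent_of_not_hasZ (p : Pauli) (h : p.hasZ = false) (a : Fin 2) : pent p a = 1 := by
  cases p <;> fin_cases a <;>
    simp_all [pent, pflip, Pauli.mat, Pauli.hasX, Pauli.hasZ, Matrix.one_apply]

variable {ι : Type*} [Fintype ι] [DecidableEq ι]

lemma hnn (p : ι → Pauli) (f : ι → Fin 2) :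
    ((-1 : ℂ)) ^ (Finset.univ.filter fun j => FF p f j = 1).card =
      (-1) ^ (Finset.univ.filter fun j => (p j).hasX = true).card *
        (-1) ^ (Finset.univ.filter fun j => f j = 1).card := by
  rw [← prod_ite_card, ← prod_ite_card, ← prod_ite_card, ← Finset.prod_mul_distrib]
  exact Finset.prod_congr rfl fun j _ => flip_ite (p j) (f j)

theorem xcore (p : ι → Pauli) (e : ℂ) (he : e ≠ 0) :
    (∃ lam : ℂ, ∀ f : ι → Fin 2,
        CC p f * (1 + e * (-1) ^ (Finset.univ.filter fun j => FF p f j = 1).card) =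
          lam * (1 + e * (-1) ^ (Finset.univ.filter fun j => f j = 1).card)) ↔
      ((∀ j, ¬ (p j).hasZ = true) ∧
          Even (Finset.univ.filter fun j => (p j).hasX = true).card) ∨
      ((∀ j, (p j).hasZ = true) ∧
        e * e = (-1) ^ (Finset.univ.filter fun j => (p j).hasX = true).card) := by
  set s := (Finset.univ.filter fun j => (p j).hasX = true).card with hs
  have hσσ : ((-1:ℂ)) ^ s * (-1) ^ s = 1 := by
    rw [← mul_pow]; norm_num
  rcases isEmpty_or_nonempty ι with hι | hι
  · constructor
    · intro _
      left
      refine ⟨fun j => isEmptyElim j, ?_⟩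
      simp [hs, Finset.univ_eq_empty]
    · intro _
      refine ⟨1, fun f => ?_⟩
      have hFF : FF p f = f := funext fun j => isEmptyElim j
      have hCC : CC p f = 1 := by simp [CC, Finset.univ_eq_empty]
      rw [hFF, hCC]
  · obtain ⟨j₀⟩ := hι
    constructor
    · rintro ⟨lam, h⟩
      by_cases hallZ : ∀ j, (p j).hasZ = true
      · right
        refine ⟨hallZ, ?_⟩
        have hCC : ∀ f : ι → Fin 2, CC p f =
            (-Complex.I) ^ s * (-1) ^ (Finset.univ.filter fun j => f j = 1).card := by
          intro f
          rw [CC_eq, hs]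
          congr 2
          · exact congrArg Finset.card (Finset.filter_congr fun j _ => by
              have := hallZ j
              cases hp : p j <;> simp_all [Pauli.hasZ, Pauli.hasX])
          · exact congrArg Finset.card (Finset.filter_congr fun j _ => by simp [hallZ j])
        have H : ∀ f : ι → Fin 2,
            ((-Complex.I) ^ s * (-1) ^ (Finset.univ.filter fun j => f j = 1).card) *
              (1 + e * ((-1) ^ s * (-1) ^ (Finset.univ.filter fun j => f j = 1).card)) =
            lam * (1 + e * (-1) ^ (Finset.univ.filter fun j => f j = 1).card) := by
          intro f
          have hf := h f
          rw [hCC f, hnn p f] at hf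
          exact hf
        have hc0 : (Finset.univ.filter fun j : ι => (0 : Fin 2) = 1).card = 0 := by
          simp
        have hc1 : (Finset.univ.filter fun j : ι =>
            (if j = j₀ then (1:Fin 2) else 0) = 1).card = 1 := by
          rw [show (Finset.univ.filter fun j : ι =>
              (if j = j₀ then (1:Fin 2) else 0) = 1) = {j₀} from by
            ext j; by_cases hj : j = j₀ <;> simp [hj]]
          simp
        have h0 := H (fun _ => 0)
        have h1 := H (fun j => if j = j₀ then 1 else 0)
        rw [hc0, pow_zero] at h0
        rw [hc1, pow_one] at h1
        set W := (-Complex.I) ^ s with hW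
        have hWne : W ≠ 0 := pow_ne_zero _ (by simpa using Complex.I_ne_zero)
        set σ := ((-1:ℂ)) ^ s with hσ
        -- h0 : (W * 1) * (1 + e * (σ * 1)) = lam * (1 + e * 1)
        -- h1 : (W * -1) * (1 + e * (σ * -1)) = lam * (1 + e * -1)
        have key : W * (2 - 2 * (e * e) * σ) = 0 := by
          linear_combination (1 - e) * h0 - (1 + e) * h1
        have h2 : 2 - 2 * (e * e) * σ = 0 := by
          rcases mul_eq_zero.mp key with hk | hk
          · exact absurd hk hWne
          · exact hk
        linear_combination (-σ/2) * h2 - (e * e) * hσσ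
      · by_cases hnoneZ : ∀ j, (p j).hasZ = false
        · left
          refine ⟨fun j => by simp [hnoneZ j], ?_⟩
          have hCC : ∀ f : ι → Fin 2, CC p f = 1 := fun f =>
            Finset.prod_eq_one fun j _ => pent_of_not_hasZ _ (hnoneZ j) _
          have H : ∀ f : ι → Fin 2,
              (1:ℂ) * (1 + e * ((-1) ^ s * (-1) ^ (Finset.univ.filter fun j => f j = 1).card)) =
              lam * (1 + e * (-1) ^ (Finset.univ.filter fun j => f j = 1).card) := by
            intro f
            have hf := h f
            rw [hCC f, hnn p f] at hf
            exact hf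
          have hc0 : (Finset.univ.filter fun j : ι => (0 : Fin 2) = 1).card = 0 := by simp
          have hc1 : (Finset.univ.filter fun j : ι =>
              (if j = j₀ then (1:Fin 2) else 0) = 1).card = 1 := by
            rw [show (Finset.univ.filter fun j : ι =>
                (if j = j₀ then (1:Fin 2) else 0) = 1) = {j₀} from by
              ext j; by_cases hj : j = j₀ <;> simp [hj]]
            simp
          have h0 := H (fun _ => 0)
          have h1 := H (fun j => if j = j₀ then 1 else 0)
          rw [hc0, pow_zero] at h0
          rw [hc1, pow_one] at h1
          have hlam : lam = 1 := by linear_combination -(h0 + h1) / 2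
          rw [hlam] at h0
          have hpow : ((-1:ℂ)) ^ s = 1 := by
            have := mul_left_cancel₀ he (show e * ((-1:ℂ)) ^ s = e * 1 by
              linear_combination h0)
            simpa using this
          exact (neg_one_pow_eq_one_iff_even (by norm_num : (-1:ℂ) ≠ 1)).mp hpow
        · exfalso
          obtain ⟨ja, hja⟩ : ∃ j, (p j).hasZ = true := by
            push_neg at hnoneZ
            obtain ⟨j, hj⟩ := hnoneZ
            exact ⟨j, by revert hj; cases (p j).hasZ <;> simp⟩
          obtain ⟨jb, hjb⟩ : ∃ j, (p j).hasZ = false := by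
            push_neg at hallZ
            obtain ⟨j, hj⟩ := hallZ
            exact ⟨j, by revert hj; cases (p j).hasZ <;> simp⟩
          have hab : ja ≠ jb := fun hE => by rw [hE, hjb] at hja; exact absurd hja (by simp)
          set y := (Finset.univ.filter fun j : ι => p j = Pauli.Y).card with hy
          set W := (-Complex.I) ^ y with hW
          have hWne : W ≠ 0 := pow_ne_zero _ (by simpa using Complex.I_ne_zero)
          have H : ∀ f : ι → Fin 2,
              (W * (-1) ^ (Finset.univ.filter fun j => (p j).hasZ = true ∧ f j = 1).card) *
                (1 + e * ((-1) ^ s * (-1) ^ (Finset.univ.filter fun j => f j = 1).card)) =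
              lam * (1 + e * (-1) ^ (Finset.univ.filter fun j => f j = 1).card) := by
            intro f
            have hf := h f
            rw [CC_eq p f, hnn p f, ← hy, ← hW] at hf
            exact hf
          -- points : c0, single ja, single jb, double {ja, jb}
          have h0 := H (fun _ => 0)
          have hA := H (fun j => if j = ja then 1 else 0)
          have hB := H (fun j => if j = jb then 1 else 0)
          have hAB := H (fun j => if j = ja ∨ j = jb then 1 else 0)
          rw [show (Finset.univ.filter fun j : ι => (0:Fin 2) = 1).card = 0 by simp,
            show (Finset.univ.filter fun j : ι => (p j).hasZ = true ∧ (0:Fin 2) = 1).card = 0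
              by simp, pow_zero] at h0
          rw [show (Finset.univ.filter fun j : ι =>
                (if j = ja then (1:Fin 2) else 0) = 1).card = 1 from by
              rw [show (Finset.univ.filter fun j : ι =>
                  (if j = ja then (1:Fin 2) else 0) = 1) = {ja} from by
                ext j; by_cases hj : j = ja <;> simp [hj]]
              simp,
            show (Finset.univ.filter fun j : ι =>
                (p j).hasZ = true ∧ (if j = ja then (1:Fin 2) else 0) = 1).card = 1 from by
              rw [show (Finset.univ.filter fun j : ι =>
                  (p j).hasZ = true ∧ (if j = ja then (1:Fin 2) else 0) = 1) = {ja} from by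
                ext j; by_cases hj : j = ja <;> simp [hj, hja]]
              simp,
            pow_one] at hA
          rw [show (Finset.univ.filter fun j : ι =>
                (if j = jb then (1:Fin 2) else 0) = 1).card = 1 from by
              rw [show (Finset.univ.filter fun j : ι =>
                  (if j = jb then (1:Fin 2) else 0) = 1) = {jb} from by
                ext j; by_cases hj : j = jb <;> simp [hj]]
              simp,
            show (Finset.univ.filter fun j : ι =>
                (p j).hasZ = true ∧ (if j = jb then (1:Fin 2) else 0) = 1).card = 0 from by
              rw [show (Finset.univ.filter fun j : ι =>
                  (p j).hasZ = true ∧ (if j = jb then (1:Fin 2) else 0) = 1) = (∅ : Finset ι)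
                from by
                ext j; by_cases hj : j = jb <;> simp [hj, hjb]]
              simp,
            pow_one, pow_zero] at hB
          rw [show (Finset.univ.filter fun j : ι =>
                (if j = ja ∨ j = jb then (1:Fin 2) else 0) = 1).card = 2 from by
              rw [show (Finset.univ.filter fun j : ι =>
                  (if j = ja ∨ j = jb then (1:Fin 2) else 0) = 1) = {ja, jb} from by
                ext j
                by_cases hj : j = ja
                · simp [hj]
                · by_cases hj' : j = jb <;> simp [hj, hj']]
              rw [Finset.card_insert_of_notMem (by simp [hab]), Finset.card_singleton],
            show (Finset.univ.filter fun j : ι =>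
                (p j).hasZ = true ∧ (if j = ja ∨ j = jb then (1:Fin 2) else 0) = 1).card = 1
              from by
              rw [show (Finset.univ.filter fun j : ι =>
                  (p j).hasZ = true ∧ (if j = ja ∨ j = jb then (1:Fin 2) else 0) = 1) = {ja}
                from by
                ext j
                by_cases hj : j = ja
                · simp [hj, hja]
                · by_cases hj' : j = jb <;> simp [hj, hj', hjb, Ne.symm hab]]
              simp,
            pow_one] at hAB
          -- h0 : (W * 1) * (1 + e * (σ * 1)) = lam * (1 + e * 1)
          -- hAB : (W * -1) * (1 + e * (σ * (-1)^2)) = lam * (1 + e * (-1)^2)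
          have k1 : W * (2 * (1 + e * (-1:ℂ) ^ s)) = 0 := by
            linear_combination h0 - hAB
          have k2 : W * (2 * (1 - e * (-1:ℂ) ^ s)) = 0 := by
            linear_combination hB - hA
          have k1' : 1 + e * (-1:ℂ) ^ s = 0 := by
            rcases mul_eq_zero.mp k1 with hk | hk
            · exact absurd hk hWne
            · linear_combination hk / 2
          have k2' : 1 - e * (-1:ℂ) ^ s = 0 := by
            rcases mul_eq_zero.mp k2 with hk | hk
            · exact absurd hk hWne
            · linear_combination hk / 2
          have : (2:ℂ) = 0 := by linear_combination k1' + k2'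
          exact absurd this (by norm_num)
    · rintro (⟨hnoneZ', hev⟩ | ⟨hallZ, he2⟩)
      · have hnoneZ : ∀ j, (p j).hasZ = false := fun j => by
          have := hnoneZ' j; revert this; cases (p j).hasZ <;> simp
        refine ⟨1, fun f => ?_⟩
        have hCC : CC p f = 1 :=
          Finset.prod_eq_one fun j _ => pent_of_not_hasZ _ (hnoneZ j) _
        rw [hnn p f, hCC, ← hs, hev.neg_one_pow]
        ring
      · have hCC : ∀ f : ι → Fin 2, CC p f =
            (-Complex.I) ^ s * (-1) ^ (Finset.univ.filter fun j => f j = 1).card := by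
          intro f
          rw [CC_eq, hs]
          congr 2
          · exact congrArg Finset.card (Finset.filter_congr fun j _ => by
              have := hallZ j
              cases hp : p j <;> simp_all [Pauli.hasZ, Pauli.hasX])
          · exact congrArg Finset.card (Finset.filter_congr fun j _ => by simp [hallZ j])
        refine ⟨(-Complex.I) ^ s * e * (-1) ^ s, fun f => ?_⟩
        rw [hnn p f, hCC f, ← hs]
        have ht : ((-1:ℂ)) ^ (Finset.univ.filter fun j => f j = 1).card = 1 ∨
            ((-1:ℂ)) ^ (Finset.univ.filter fun j => f j = 1).card = -1 := by
          rcases Nat.even_or_odd (Finset.univ.filter fun j => f j = 1).card with hE | hO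
          · exact Or.inl hE.neg_one_pow
          · exact Or.inr hO.neg_one_pow
        rcases ht with ht | ht <;> rw [ht]
        · linear_combination (-((-Complex.I) ^ s) * (-1:ℂ) ^ s) * he2 +
            (-((-Complex.I) ^ s)) * hσσ
        · linear_combination (((-Complex.I) ^ s) * (-1:ℂ) ^ s) * he2 +
            ((-Complex.I) ^ s) * hσσ

end PW
namespace PW

lemma fin2_zero_add_one' : (0 : Fin 2) + 1 = 1 := by decide
lemma fin2_one_add_one' : (1 : Fin 2) + 1 = 0 := by decide

lemma pent_I (a : Fin 2) : pent Pauli.I a = 1 := by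
  fin_cases a <;> simp [pent, pflip, Pauli.mat, Pauli.hasX, Matrix.one_apply]
lemma pent_X (a : Fin 2) : pent Pauli.X a = 1 := by
  fin_cases a <;> simp [pent, pflip, Pauli.mat, Pauli.hasX]
lemma pent_Y0 : pent Pauli.Y 0 = -Complex.I := by
  simp [pent, pflip, Pauli.mat, Pauli.hasX]
lemma pent_Y1 : pent Pauli.Y 1 = Complex.I := by
  simp [pent, pflip, Pauli.mat, Pauli.hasX, fin2_one_add_one']
lemma pent_Z0 : pent Pauli.Z 0 = 1 := by
  simp [pent, pflip, Pauli.mat, Pauli.hasX]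
lemma pent_Z1 : pent Pauli.Z 1 = -1 := by
  simp [pent, pflip, Pauli.mat, Pauli.hasX]
lemma pflip_I (a : Fin 2) : pflip Pauli.I a = a := rfl
lemma pflip_Z (a : Fin 2) : pflip Pauli.Z a = a := rfl
lemma pflip_X0 : pflip Pauli.X 0 = 1 := by decide
lemma pflip_X1 : pflip Pauli.X 1 = 0 := by decide
lemma pflip_Y0 : pflip Pauli.Y 0 = 1 := by decide
lemma pflip_Y1 : pflip Pauli.Y 1 = 0 := by decide

set_option maxHeartbeats 1000000 in
lemma e2_iff (q₁ q₂ : Pauli) :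
    (∃ lam : ℂ, ∀ x y : Fin 2,
        pent q₁ x * pent q₂ y *
            (if pflip q₁ x = 1 ∧ pflip q₂ y = 1 then (-1:ℂ) else 1) =
          lam * (if x = 1 ∧ y = 1 then (-1:ℂ) else 1)) ↔
      ((q₁.hasX = true ↔ q₂.hasZ = true) ∧ (q₁.hasZ = true ↔ q₂.hasX = true)) := by
  constructor
  · rintro ⟨lam, h⟩
    have h00 := h 0 0
    have h01 := h 0 1
    have h10 := h 1 0
    have h11 := h 1 1
    clear h
    cases q₁ <;> cases q₂ <;>
      norm_num [pent_I, pent_X, pent_Y0, pent_Y1, pent_Z0, pent_Z1, pflip_I, pflip_Z,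
        pflip_X0, pflip_X1, pflip_Y0, pflip_Y1, Pauli.hasX, Pauli.hasZ]
        at h00 h01 h10 h11 ⊢ <;>
      first
        | (have h2 : (2:ℂ) = 0 := by linear_combination h00 - h01
           norm_num at h2)
        | (have h2 : (2:ℂ) = 0 := by linear_combination h01 - h00
           norm_num at h2)
        | (have h2 : (2:ℂ) = 0 := by linear_combination h00 - h10
           norm_num at h2)
        | (have h2 : (2:ℂ) = 0 := by linear_combination h10 - h00
           norm_num at h2)
        | (have h2 : (2:ℂ) = 0 := by linear_combination h00 + h11
           norm_num at h2)
        | (have h2 : (2:ℂ) = 0 := by linear_combination -(h00 + h11)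
           norm_num at h2)
        | (have h2 : (2:ℂ) = 0 := by linear_combination h00 - h11
           norm_num at h2)
        | (have h2 : (2:ℂ) = 0 := by linear_combination h11 - h00
           norm_num at h2)
        | (have h2 : (2:ℂ) = 0 := by linear_combination h01 - h10
           norm_num at h2)
        | (have h2 : Complex.I = 0 := by linear_combination (h00 - h01) / 2
           exact Complex.I_ne_zero h2)
        | (have h2 : Complex.I = 0 := by linear_combination (h01 - h00) / 2
           exact Complex.I_ne_zero h2)
        | (have h2 : Complex.I = 0 := by linear_combination (h00 - h10) / 2
           exact Complex.I_ne_zero h2)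
        | (have h2 : Complex.I = 0 := by linear_combination (h10 - h00) / 2
           exact Complex.I_ne_zero h2)
        | (have h2 : Complex.I = 0 := by linear_combination (h00 + h11) / 2
           exact Complex.I_ne_zero h2)
        | (have h2 : Complex.I = 0 := by linear_combination -(h00 + h11) / 2
           exact Complex.I_ne_zero h2)
  · intro hP
    refine ⟨1, fun x y => ?_⟩
    cases q₁ <;> cases q₂ <;> fin_cases x <;> fin_cases y <;>
      simp_all [pent_I, pent_X, pent_Y0, pent_Y1, pent_Z0, pent_Z1, pflip_I, pflip_Z,
        pflip_X0, pflip_X1, pflip_Y0, pflip_Y1, Pauli.hasX, Pauli.hasZ]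

end PW
namespace PW

variable {ι : Type*} [Fintype ι] [DecidableEq ι]

theorem hcore (p : ι → Pauli) (hcard : Fintype.card ι = 2) :
    (∃ lam : ℂ, ∀ f : ι → Fin 2,
        CC p f * (if ∀ j, FF p f j = 1 then (-1:ℂ) else 1) =
          lam * (if ∀ j, f j = 1 then (-1:ℂ) else 1)) ↔
      (∀ j₁ j₂ : ι, j₁ ≠ j₂ →
        (((p j₁).hasX = true) ↔ ((p j₂).hasZ = true)) ∧
        (((p j₁).hasZ = true) ↔ ((p j₂).hasX = true))) := by
  have hcard' : (Finset.univ : Finset ι).card = 2 := by rw [Finset.card_univ, hcard]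
  obtain ⟨a, b, hab, huniv⟩ := Finset.card_eq_two.mp hcard'
  have hmem : ∀ j : ι, j = a ∨ j = b := fun j => by
    have hj := Finset.mem_univ j
    rw [huniv] at hj
    simpa using hj
  have hall : ∀ (f : ι → Fin 2), (∀ j, f j = 1) ↔ (f a = 1 ∧ f b = 1) := fun f =>
    ⟨fun h => ⟨h a, h b⟩, fun ⟨h1, h2⟩ j => by rcases hmem j with rfl | rfl <;> assumption⟩
  have hCC : ∀ f : ι → Fin 2, CC p f = pent (p a) (f a) * pent (p b) (f b) := fun f => by
    rw [show CC p f = ∏ j ∈ Finset.univ, pent (p j) (f j) from rfl, huniv,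
      Finset.prod_pair hab]
  have hLHS : (∃ lam : ℂ, ∀ f : ι → Fin 2,
      CC p f * (if ∀ j, FF p f j = 1 then (-1:ℂ) else 1) =
        lam * (if ∀ j, f j = 1 then (-1:ℂ) else 1)) ↔
      (∃ lam : ℂ, ∀ x y : Fin 2,
        pent (p a) x * pent (p b) y *
            (if pflip (p a) x = 1 ∧ pflip (p b) y = 1 then (-1:ℂ) else 1) =
          lam * (if x = 1 ∧ y = 1 then (-1:ℂ) else 1)) := by
    constructor <;> rintro ⟨lam, h⟩ <;> refine ⟨lam, ?_⟩
    · intro x y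
      have hf := h (fun j => if j = a then x else y)
      rw [hCC] at hf
      simpa [hall, FF, Ne.symm hab] using hf
    · intro f
      have hf := h (f a) (f b)
      rw [hCC]
      simpa [hall, FF] using hf
  rw [hLHS, e2_iff]
  constructor
  · intro hP j₁ j₂ hne
    rcases hmem j₁ with rfl | rfl <;> rcases hmem j₂ with rfl | rfl
    · exact absurd rfl hne
    · exact hP
    · exact ⟨hP.2.symm, hP.1.symm⟩
    · exact absurd rfl hne
  · intro h
    exact h a b hab

end PW
namespace PW

lemma bool_not_true {b : Bool} : ¬ b = true ↔ b = false := by cases b <;> simp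

variable {Node Wire : Type} [Fintype Node] [DecidableEq Node] [Fintype Wire] [DecidableEq Wire]

lemma card_subtype (D : ZXDiagram Node Wire) (ν : Node) (Q : Wire → Prop) [DecidablePred Q] :
    (Finset.univ.filter fun j : Wire => D.adj ν j = true ∧ Q j).card =
      (Finset.univ.filter fun j : {j : Wire // D.adj ν j = true} => Q j.1).card := by
  rw [← Fintype.card_subtype, ← Fintype.card_subtype]
  exact Fintype.card_congr (Equiv.subtypeSubtypeEquivSubtypeInter
    (fun j => D.adj ν j = true) Q).symm

lemma node_iff_Z (D : ZXDiagram Node Wire) (w : Wire → Pauli) (ν : Node)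
    (htyp : D.typ ν = NodeType.Z) :
    (∃ lam : ℂ,
        (pauliOp fun j : {j : Wire // D.adj ν j = true} => w j.1).mulVec (localState D ν 0) =
          lam • localState D ν 0) ↔
      ((∀ j, D.adj ν j = true → oppSupp (D.typ ν) (w j) = true) ∨
        (∀ j, D.adj ν j = true → oppSupp (D.typ ν) (w j) = false)) ∧
      ParityAt D w ν ∧ (HasOpp D w ν → IsMulHalfPi (D.phase ν)) := by
  have hloc : localState D ν 0 = fun f : {j : Wire // D.adj ν j = true} → Fin 2 =>
      (if ∀ j, f j = 0 then (1:ℂ) else 0) +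
        Complex.exp ((D.phase ν : ℂ) * Complex.I) * (if ∀ j, f j = 1 then 1 else 0) := by
    simp only [localState, htyp, Complex.ofReal_zero, add_zero]
  rw [hloc]
  have h1 : (∀ j : {j : Wire // D.adj ν j = true}, (w j.1).hasX = true) ↔
      (∀ j, D.adj ν j = true → oppSupp (D.typ ν) (w j) = true) := by
    rw [htyp]
    exact ⟨fun h j hj => h ⟨j, hj⟩, fun h j => h j.1 j.2⟩
  have h2 : (∀ j : {j : Wire // D.adj ν j = true}, ¬ (w j.1).hasX = true) ↔
      (∀ j, D.adj ν j = true → oppSupp (D.typ ν) (w j) = false) := by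
    rw [htyp]
    exact ⟨fun h j hj => bool_not_true.mp (h ⟨j, hj⟩),
      fun h j => bool_not_true.mpr (h j.1 j.2)⟩
  have h3 : (∃ j : {j : Wire // D.adj ν j = true}, (w j.1).hasX = true) ↔ HasOpp D w ν := by
    rw [HasOpp, htyp]
    exact ⟨fun ⟨j, hj⟩ => ⟨j.1, j.2, hj⟩, fun ⟨j, h1', h2'⟩ => ⟨⟨j, h1'⟩, h2'⟩⟩
  have h4 : sameCount D w ν =
      (Finset.univ.filter fun j : {j : Wire // D.adj ν j = true} =>
        (w j.1).hasZ = true).card := by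
    rw [sameCount, htyp]
    exact card_subtype D ν fun j => (w j).hasZ = true
  refine Iff.trans (Iff.trans (exists_iff _ _)
    (zcore _ (Complex.exp ((D.phase ν : ℂ) * Complex.I)) (Complex.exp_ne_zero _)))
    (Iff.trans (cond_translate (D.phase ν) _ _ ?_) ?_)
  · intro hA hne
    have : IsEmpty {j : Wire // D.adj ν j = true} := ⟨fun j => hne ⟨j, hA j⟩⟩
    simp [Finset.univ_eq_empty]
  · have e5 : Even ((Finset.univ.filter fun j : {j : Wire // D.adj ν j = true} =>
        (w j.1).hasZ = true).card) ↔ Even (sameCount D w ν) := by rw [h4]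
    have e6 : (¬ ∃ j : {j : Wire // D.adj ν j = true}, (w j.1).hasX = true) ↔
        ¬ HasOpp D w ν := not_congr h3
    exact and_congr (or_congr h1 h2)
      (and_congr
        (and_congr (imp_congr Iff.rfl e5) (imp_congr Iff.rfl (iff_congr e5 e6)))
        (imp_congr h3 Iff.rfl))

lemma node_iff_X (D : ZXDiagram Node Wire) (w : Wire → Pauli) (ν : Node)
    (htyp : D.typ ν = NodeType.X) :
    (∃ lam : ℂ,
        (pauliOp fun j : {j : Wire // D.adj ν j = true} => w j.1).mulVec (localState D ν 0) =
          lam • localState D ν 0) ↔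
      ((∀ j, D.adj ν j = true → oppSupp (D.typ ν) (w j) = true) ∨
        (∀ j, D.adj ν j = true → oppSupp (D.typ ν) (w j) = false)) ∧
      ParityAt D w ν ∧ (HasOpp D w ν → IsMulHalfPi (D.phase ν)) := by
  have hloc : localState D ν 0 = fun f : {j : Wire // D.adj ν j = true} → Fin 2 =>
      1 + Complex.exp ((D.phase ν : ℂ) * Complex.I) *
        (-1 : ℂ) ^ (Finset.univ.filter fun j => f j = 1).card := by
    simp only [localState, htyp, Complex.ofReal_zero, add_zero]
  rw [hloc]
  have h1 : (∀ j : {j : Wire // D.adj ν j = true}, (w j.1).hasZ = true) ↔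
      (∀ j, D.adj ν j = true → oppSupp (D.typ ν) (w j) = true) := by
    rw [htyp]
    exact ⟨fun h j hj => h ⟨j, hj⟩, fun h j => h j.1 j.2⟩
  have h2 : (∀ j : {j : Wire // D.adj ν j = true}, ¬ (w j.1).hasZ = true) ↔
      (∀ j, D.adj ν j = true → oppSupp (D.typ ν) (w j) = false) := by
    rw [htyp]
    exact ⟨fun h j hj => bool_not_true.mp (h ⟨j, hj⟩),
      fun h j => bool_not_true.mpr (h j.1 j.2)⟩
  have h3 : (∃ j : {j : Wire // D.adj ν j = true}, (w j.1).hasZ = true) ↔ HasOpp D w ν := by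
    rw [HasOpp, htyp]
    exact ⟨fun ⟨j, hj⟩ => ⟨j.1, j.2, hj⟩, fun ⟨j, h1', h2'⟩ => ⟨⟨j, h1'⟩, h2'⟩⟩
  have h4 : sameCount D w ν =
      (Finset.univ.filter fun j : {j : Wire // D.adj ν j = true} =>
        (w j.1).hasX = true).card := by
    rw [sameCount, htyp]
    exact card_subtype D ν fun j => (w j).hasX = true
  refine Iff.trans (Iff.trans (exists_iff _ _)
    (xcore _ (Complex.exp ((D.phase ν : ℂ) * Complex.I)) (Complex.exp_ne_zero _)))
    (Iff.trans (cond_translate (D.phase ν) _ _ ?_) ?_)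
  · intro hA hne
    have : IsEmpty {j : Wire // D.adj ν j = true} := ⟨fun j => hne ⟨j, hA j⟩⟩
    simp [Finset.univ_eq_empty]
  · have e5 : Even ((Finset.univ.filter fun j : {j : Wire // D.adj ν j = true} =>
        (w j.1).hasX = true).card) ↔ Even (sameCount D w ν) := by rw [h4]
    have e6 : (¬ ∃ j : {j : Wire // D.adj ν j = true}, (w j.1).hasZ = true) ↔
        ¬ HasOpp D w ν := not_congr h3
    exact and_congr (or_congr h1 h2)
      (and_congr
        (and_congr (imp_congr Iff.rfl e5) (imp_congr Iff.rfl (iff_congr e5 e6)))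
        (imp_congr h3 Iff.rfl))

lemma node_iff_H (D : ZXDiagram Node Wire) (w : Wire → Pauli) (ν : Node)
    (htyp : D.typ ν = NodeType.H) :
    (∃ lam : ℂ,
        (pauliOp fun j : {j : Wire // D.adj ν j = true} => w j.1).mulVec (localState D ν 0) =
          lam • localState D ν 0) ↔
      (∀ j₁ j₂, D.adj ν j₁ = true → D.adj ν j₂ = true → j₁ ≠ j₂ →
        (((w j₁).hasX = true) ↔ ((w j₂).hasZ = true)) ∧
        (((w j₁).hasZ = true) ↔ ((w j₂).hasX = true))) := by
  have hloc : localState D ν 0 = fun f : {j : Wire // D.adj ν j = true} → Fin 2 =>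
      if ∀ j, f j = 1 then (-1 : ℂ) else 1 := by
    simp only [localState, htyp]
  rw [hloc]
  have hcard : Fintype.card {j : Wire // D.adj ν j = true} = 2 := by
    rw [Fintype.card_subtype]
    exact D.h_deg_two ν htyp
  refine Iff.trans (Iff.trans (exists_iff _ _) (hcore _ hcard)) ?_
  constructor
  · intro h j₁ j₂ h1' h2' hne
    exact h ⟨j₁, h1'⟩ ⟨j₂, h2'⟩ fun hE => hne (congrArg Subtype.val hE)
  · intro h j₁ j₂ hne
    exact h j₁.1 j₂.1 j₁.2 j₂.2 fun hE => hne (Subtype.ext hE)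

end PW

/-- A Pauli labelling is a Pauli web iff it satisfies the H,
all-or-nothing, parity, and Clifford conditions. -/
theorem isPauliWeb_iff_conditions {Node Wire : Type} [Fintype Node] [DecidableEq Node]
    [Fintype Wire] [DecidableEq Wire] (D : ZXDiagram Node Wire) (w : Wire → Pauli) :
    IsPauliWeb D w ↔ HCond D w ∧ AllOrNothing D w ∧ ParityCond D w ∧ CliffordCond D w := by
  constructor
  · intro hw
    refine ⟨fun ν j₁ j₂ hH h1 h2 hne => ?_, fun ν hsp => ?_, fun ν hsp => ?_,
      fun ν hsp hop => ?_⟩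
    · exact (PW.node_iff_H D w ν hH).mp (hw ν) j₁ j₂ h1 h2 hne
    · rcases htyp : D.typ ν with _ | _ | _
      · rw [← htyp]
        exact ((PW.node_iff_Z D w ν htyp).mp (hw ν)).1
      · rw [← htyp]
        exact ((PW.node_iff_X D w ν htyp).mp (hw ν)).1
      · exact absurd htyp hsp
    · rcases htyp : D.typ ν with _ | _ | _
      · exact ((PW.node_iff_Z D w ν htyp).mp (hw ν)).2.1
      · exact ((PW.node_iff_X D w ν htyp).mp (hw ν)).2.1
      · exact absurd htyp hsp
    · rcases htyp : D.typ ν with _ | _ | _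
      · exact ((PW.node_iff_Z D w ν htyp).mp (hw ν)).2.2 hop
      · exact ((PW.node_iff_X D w ν htyp).mp (hw ν)).2.2 hop
      · exact absurd htyp hsp
  · rintro ⟨hH, hA, hP, hC⟩ ν
    rcases htyp : D.typ ν with _ | _ | _
    · have hsp : D.IsSpiderNode ν := by simp [ZXDiagram.IsSpiderNode, htyp]
      exact (PW.node_iff_Z D w ν htyp).mpr ⟨hA ν hsp, hP ν hsp, hC ν hsp⟩
    · have hsp : D.IsSpiderNode ν := by simp [ZXDiagram.IsSpiderNode, htyp]
      exact (PW.node_iff_X D w ν htyp).mpr ⟨hA ν hsp, hP ν hsp, hC ν hsp⟩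
    · exact (PW.node_iff_H D w ν htyp).mpr fun j₁ j₂ h1 h2 hne => hH ν j₁ j₂ htyp h1 h2 hne
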